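/- (Main Theorem) The sequence T is morphic: for every m ≥ 0, the word τ^m(1) is a prefix of τ^{m+1}(1), the length of τ^m(1) tends to infinity, and for every natural number N and every m such that N is less than the length of the word τ^m(1), one has T(N) = λ(a), where a is the letter at position N (counting from 0) of τ^m(1). In other words, T = λ(t) where t is the fixed point of τ starting with the letter 1. -/

import Mathlib

/-- The golden mean φ = (1+√5)/2. -/
noncomputable def phi : ℝ := (1 + Real.sqrt 5) / 2

/-- `d : ℤ → ℕ` is a base-phi expansion of `N`: finitely supported, digits at most 1,
no two consecutive digits equal 1, and `∑ d i * φ^i = N`. -/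
def IsBasePhi (N : ℕ) (d : ℤ → ℕ) : Prop :=
  {i : ℤ | d i ≠ 0}.Finite ∧ (∀ i, d i ≤ 1) ∧ (∀ i, d i * d (i + 1) = 0) ∧
    ∑' i : ℤ, (d i : ℝ) * phi ^ i = (N : ℝ)

/-- The Lucas numbers: L 0 = 2, L 1 = 1, L (n+2) = L (n+1) + L n. -/
def Lucas : ℕ → ℕ
  | 0 => 2
  | 1 => 1
  | n + 2 => Lucas (n + 1) + Lucas n

/-- The sum of the digits of a (finitely supported) digit function. -/
noncomputable def digitSum (d : ℤ → ℕ) : ℕ := ∑' i : ℤ, d i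

/-- The morphism τ on the alphabet {1,…,8}. -/
def tau : ℕ → List ℕ
  | 1 => [1, 2]
  | 2 => [3, 1, 2]
  | 3 => [4, 7]
  | 4 => [8, 3, 1, 2]
  | 5 => [5, 6]
  | 6 => [7, 5, 6]
  | 7 => [8, 3]
  | 8 => [4, 7, 5, 6]
  | _ => []

/-- τ applied to a word, letter by letter. -/
def tauWord (w : List ℕ) : List ℕ := w.flatMap tau

/-- The letter-to-letter map λ with λ(1)=λ(3)=λ(6)=λ(8)=0 and λ(2)=λ(4)=λ(5)=λ(7)=1. -/
def lam : ℕ → ℕ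
  | 2 => 1
  | 4 => 1
  | 5 => 1
  | 7 => 1
  | _ => 0

lemma phi_pos : 0 < phi := by
  have := Real.sqrt_nonneg 5
  unfold phi; linarith

lemma phi_ne_zero : phi ≠ 0 := ne_of_gt phi_pos

lemma phi_sq : phi ^ 2 = phi + 1 := by
  have h5 : Real.sqrt 5 ^ 2 = 5 := Real.sq_sqrt (by norm_num)
  unfold phi; nlinarith [h5]

lemma phi_inv : phi⁻¹ = phi - 1 :=
  inv_eq_of_mul_eq_one_right (by linear_combination phi_sq)

lemma zp1 (a : ℤ) : phi ^ (a + 1) = phi ^ a * phi := zpow_add_one₀ phi_ne_zero a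

lemma zm1 (a : ℤ) : phi ^ (a - 1) = phi ^ a * (phi - 1) := by
  rw [zpow_sub_one₀ phi_ne_zero, phi_inv]

lemma zp2 (a : ℤ) : phi ^ (a + 2) = phi ^ a * (phi + 1) := by
  rw [show a + 2 = a + 1 + 1 from by ring, zp1, zp1]
  linear_combination (phi ^ a) * phi_sq

lemma zm2 (a : ℤ) : phi ^ (a - 2) = phi ^ a * (2 - phi) := by
  rw [show a - 2 = a - 1 - 1 from by ring, zm1, zm1]
  linear_combination (phi ^ a) * phi_sq

lemma lucas_phi (m : ℕ) :
    ((Lucas (2*m) : ℝ) = phi ^ (2*(m:ℤ)) + phi ^ (-(2*(m:ℤ)))) ∧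
    ((Lucas (2*m+1) : ℝ) = phi ^ (2*(m:ℤ)+1) - phi ^ (-(2*(m:ℤ))-1)) := by
  induction m with
  | zero =>
    constructor
    · norm_num [Lucas]
    · rw [show (2*((0:ℕ):ℤ)+1) = 0 + 1 from by norm_num, zp1,
        show (-(2*((0:ℕ):ℤ))-1) = 0 - 1 from by norm_num, zm1]
      norm_num [Lucas]
  | succ m ih =>
    obtain ⟨h1, h2⟩ := ih
    have r1 : (Lucas (2*(m+1)) : ℝ) = (Lucas (2*m+1) : ℝ) + (Lucas (2*m) : ℝ) := by
      rw [show 2*(m+1) = (2*m)+2 from by ring]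
      norm_cast
    have r2 : (Lucas (2*(m+1)+1) : ℝ) = (Lucas (2*(m+1)) : ℝ) + (Lucas (2*m+1) : ℝ) := by
      rw [show 2*(m+1)+1 = (2*m+1)+2 from by ring, show 2*(m+1) = (2*m+1)+1 from by ring]
      norm_cast
    have e1 : (2*(((m+1):ℕ):ℤ)) = (2*(m:ℤ)) + 2 := by push_cast; ring
    have e2 : (-(2*(((m+1):ℕ):ℤ))) = (-(2*(m:ℤ))) - 2 := by push_cast; ring
    have e3 : (2*(((m+1):ℕ):ℤ)+1) = (2*(m:ℤ)+1) + 2 := by push_cast; ring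
    have e4 : (-(2*(((m+1):ℕ):ℤ))-1) = (-(2*(m:ℤ))-1) - 2 := by push_cast; ring
    refine ⟨?_, ?_⟩
    · rw [r1, h1, h2, e2, e1, zp2, zm2, zp1, zm1]; ring
    · rw [r2, r1, h1, h2, e4, e3, zp2, zm2, zp1, zm1]
      linear_combination (-(phi ^ (2*(m:ℤ)) + phi ^ (-(2*(m:ℤ))))) * phi_sq

/-- `(ELBL m) = (P, E, B)` where `E` is the list of base-phi expansions (as lists of
exponents) of `0, 1, ..., Lucas (2m+1)`, `P` is the corresponding list for the previous
level (expansions of `0, ..., Lucas (2m-1)`), and `B` is the list of "windowed"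
expansions of `j - phi^(-2m)` for `j = 1, ..., Lucas (2m) - 1`. -/
def ELBL : ℕ → List (List ℤ) × List (List ℤ) × List (List ℤ)
  | 0 => ([], [[], [0]], [[]])
  | m+1 =>
    let P := (ELBL m).1
    let E := (ELBL m).2.1
    let B := (ELBL m).2.2
    (E,
     E ++ B.map (· ++ [(2*(m:ℤ)+1), (-(2*(m:ℤ))-2)]) ++ E.map (· ++ [(2*(m:ℤ)+2), (-(2*(m:ℤ))-2)]),
     B.map (· ++ [(-(2*(m:ℤ))-1)]) ++ P.map (· ++ [(2*(m:ℤ)), (-(2*(m:ℤ))-1)]) ++ B.map (· ++ [(2*(m:ℤ)+1)]))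

lemma ELBL_succ_1 (m : ℕ) : (ELBL (m+1)).1 = (ELBL m).2.1 := rfl

lemma ELBL_succ_21 (m : ℕ) : (ELBL (m+1)).2.1 =
    (ELBL m).2.1 ++ (ELBL m).2.2.map (· ++ [(2*(m:ℤ)+1), (-(2*(m:ℤ))-2)])
      ++ (ELBL m).2.1.map (· ++ [(2*(m:ℤ)+2), (-(2*(m:ℤ))-2)]) := rfl

lemma ELBL_succ_22 (m : ℕ) : (ELBL (m+1)).2.2 =
    (ELBL m).2.2.map (· ++ [(-(2*(m:ℤ))-1)]) ++ (ELBL m).1.map (· ++ [(2*(m:ℤ)), (-(2*(m:ℤ))-1)])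
      ++ (ELBL m).2.2.map (· ++ [(2*(m:ℤ)+1)]) := rfl

/-- digit list with all entries pairwise at distance ≥ 2 -/
def Gap (l : List ℤ) : Prop := ∀ i ∈ l, ∀ j ∈ l, i ≠ j → i + 2 ≤ j ∨ j + 2 ≤ i

noncomputable def rsum (l : List ℤ) : ℝ := (l.map (fun i => phi ^ i)).sum

lemma rsum_append1 (l : List ℤ) (x : ℤ) : rsum (l ++ [x]) = rsum l + phi ^ x := by
  simp [rsum]

lemma rsum_append2 (l : List ℤ) (x y : ℤ) :
    rsum (l ++ [x, y]) = rsum l + phi ^ x + phi ^ y := by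
  simp [rsum]; ring

/-- good list of expansions with window `w`: entry `N` is an expansion of `N`. -/
def GE (w : ℤ) (L : List (List ℤ)) : Prop :=
  ∀ (N : ℕ) (h : N < L.length),
    (∀ i ∈ L[N], -w ≤ i ∧ i ≤ w) ∧ L[N].Nodup ∧ Gap L[N] ∧ rsum L[N] = N

/-- good list of windowed expansions: entry `j-1` is an expansion of `j - phi^(-w)`. -/
def GB (w : ℤ) (L : List (List ℤ)) : Prop :=
  ∀ (N : ℕ) (h : N < L.length),
    (∀ i ∈ L[N], 1-w ≤ i ∧ i ≤ w-1) ∧ L[N].Nodup ∧ Gap L[N] ∧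
      rsum L[N] = (N+1 : ℝ) - phi ^ (-w)

lemma good_append2 {l : List ℤ} {x y lo hi : ℤ}
    (hwin : ∀ i ∈ l, lo ≤ i ∧ i ≤ hi) (hnd : l.Nodup) (hgap : Gap l)
    (hx : hi + 2 ≤ x) (hy : y + 2 ≤ lo) (hxy : y + 2 ≤ x) :
    (l ++ [x, y]).Nodup ∧ Gap (l ++ [x, y]) := by
  constructor
  · rw [List.nodup_append]
    refine ⟨hnd, by simp; omega, ?_⟩
    intro a ha b hb
    have := hwin a ha
    simp at hb
    rcases hb with rfl | rfl <;> omega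
  · intro i hi j hj hne
    have hmem : ∀ z, z ∈ l ++ [x, y] → z ∈ l ∨ z = x ∨ z = y := by
      intro z hz; simpa using hz
    rcases hmem i hi with hi' | rfl | rfl <;> rcases hmem j hj with hj' | rfl | rfl
    · exact hgap _ hi' _ hj' hne
    · have := hwin i hi'; omega
    · have := hwin i hi'; omega
    · have := hwin j hj'; omega
    · omega
    · omega
    · have := hwin j hj'; omega
    · omega
    · omega

lemma good_append1 {l : List ℤ} {x lo hi : ℤ}
    (hwin : ∀ i ∈ l, lo ≤ i ∧ i ≤ hi) (hnd : l.Nodup) (hgap : Gap l)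
    (hx : hi + 2 ≤ x ∨ x + 2 ≤ lo) :
    (l ++ [x]).Nodup ∧ Gap (l ++ [x]) := by
  constructor
  · rw [List.nodup_append]
    refine ⟨hnd, by simp, ?_⟩
    intro a ha b hb
    have := hwin a ha
    simp at hb
    subst hb; omega
  · intro i hi j hj hne
    have hmem : ∀ z, z ∈ l ++ [x] → z ∈ l ∨ z = x := by
      intro z hz; simpa using hz
    rcases hmem i hi with hi' | rfl <;> rcases hmem j hj with hj' | rfl
    · exact hgap _ hi' _ hj' hne
    · have := hwin i hi'; omega
    · have := hwin j hj'; omega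
    · omega

lemma getElem_3l {α} (X Y Z : List α) (N : ℕ) (hN : N < X.length)
    (h : N < ((X ++ Y) ++ Z).length) : ((X ++ Y) ++ Z)[N] = X[N] := by
  rw [List.getElem_append_left (by simp; omega), List.getElem_append_left hN]

lemma getElem_3m {α} (X Y Z : List α) (N : ℕ) (hx : X.length ≤ N)
    (hN : N - X.length < Y.length)
    (h : N < ((X ++ Y) ++ Z).length) : ((X ++ Y) ++ Z)[N] = Y[N - X.length] := by
  rw [List.getElem_append_left (by simp; omega), List.getElem_append_right hx]

lemma getElem_3r {α} (X Y Z : List α) (N : ℕ) (hxy : X.length + Y.length ≤ N)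
    (h : N < ((X ++ Y) ++ Z).length) :
    ((X ++ Y) ++ Z)[N] = Z[N - X.length - Y.length]'(by simp at h; omega) := by
  rw [List.getElem_append_right (by simp; omega)]
  congr 1
  simp; omega

lemma ELBL0 : ELBL 0 = ([], [[], [0]], [[]]) := rfl

lemma master (m : ℕ) :
    (ELBL m).1.length + Lucas (2*m) = Lucas (2*m+1) + 1 ∧
    (ELBL m).2.1.length = Lucas (2*m+1) + 1 ∧
    (ELBL m).2.2.length + 1 = Lucas (2*m) ∧
    GE (2*(m:ℤ) - 2) (ELBL m).1 ∧
    GE (2*(m:ℤ)) (ELBL m).2.1 ∧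
    GB (2*(m:ℤ)) (ELBL m).2.2 := by
  induction m with
  | zero =>
    refine ⟨rfl, rfl, rfl, ?_, ?_, ?_⟩
    · intro N h; simp [ELBL0] at h
    · intro N h
      have h2 : N < 2 := by simpa [ELBL0] using h
      interval_cases N
      · refine ⟨?_, ?_, ?_, ?_⟩ <;> simp [ELBL0, rsum, Gap]
      · refine ⟨?_, ?_, ?_, ?_⟩ <;> simp [ELBL0, rsum, Gap]
    · intro N h
      have h2 : N < 1 := by simpa [ELBL0] using h
      interval_cases N
      refine ⟨?_, ?_, ?_, ?_⟩ <;> simp [ELBL0, rsum, Gap, Lucas]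
  | succ m ih =>
    obtain ⟨lP, lE, lB, hP, hE, hB⟩ := ih
    obtain ⟨h1, h2⟩ := lucas_phi m
    have LR1 : Lucas (2*(m+1)) = Lucas (2*m+1) + Lucas (2*m) := by
      rw [show 2*(m+1) = (2*m)+2 from by ring]; rfl
    have LR2 : Lucas (2*(m+1)+1) = Lucas (2*(m+1)) + Lucas (2*m+1) := by
      rw [show 2*(m+1)+1 = (2*m+1)+2 from by ring, show 2*(m+1) = (2*m+1)+1 from by ring]; rfl
    have enrm : (-(2*(m:ℤ)+2)) = (-(2*(m:ℤ))) - 2 := by ring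
    refine ⟨?_, ?_, ?_, ?_, ?_, ?_⟩
    · rw [ELBL_succ_1]; omega
    · rw [ELBL_succ_21]; simp only [List.length_append, List.length_map]; omega
    · rw [ELBL_succ_22]; simp only [List.length_append, List.length_map]; omega
    · rw [ELBL_succ_1, show (2*(((m+1):ℕ):ℤ) - 2) = 2*(m:ℤ) from by push_cast; ring]
      exact hE
    · rw [ELBL_succ_21,
        show (2*(((m+1):ℕ):ℤ)) = 2*(m:ℤ) + 2 from by push_cast; ring]
      intro N hN
      have hlen := hN
      simp only [List.length_append, List.length_map] at hlen
      rcases lt_or_ge N (ELBL m).2.1.length with hc1 | hc1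
      · rw [getElem_3l _ _ _ _ hc1]
        obtain ⟨w, nd, gp, vl⟩ := hE N hc1
        exact ⟨fun i hi => by have := w i hi; omega, nd, gp, vl⟩
      · rcases lt_or_ge (N - (ELBL m).2.1.length) (ELBL m).2.2.length with hc2 | hc2
        · rw [getElem_3m _ _ _ _ (by omega) (by simpa using hc2)]
          rw [List.getElem_map]
          set j := N - (ELBL m).2.1.length with hj
          obtain ⟨w, nd, gp, vl⟩ := hB j hc2
          refine ⟨?_, ?_, ?_, ?_⟩
          · intro i hi
            rcases List.mem_append.1 hi with hi' | hi'
            · have := w i hi'; omega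
            · simp at hi'; omega
          · exact (good_append2 w nd gp (by omega) (by omega) (by omega)).1
          · exact (good_append2 w nd gp (by omega) (by omega) (by omega)).2
          · rw [rsum_append2, vl]
            have hNv : (N:ℝ) = (Lucas (2*m+1) : ℝ) + 1 + (j:ℝ) := by
              have h' : N = Lucas (2*m+1) + 1 + j := by omega
              rw [h']; push_cast; ring
            rw [hNv, h2]
            simp only [enrm, zp2, zm2, zp1, zm1]
            ring
        · rw [getElem_3r _ _ _ _ (by simp only [List.length_map]; omega)]
          simp only [List.length_map]
          rw [List.getElem_map]
          set k := N - (ELBL m).2.1.length - (ELBL m).2.2.length with hk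
          have hklt : k < (ELBL m).2.1.length := by omega
          obtain ⟨w, nd, gp, vl⟩ := hE k hklt
          refine ⟨?_, ?_, ?_, ?_⟩
          · intro i hi
            rcases List.mem_append.1 hi with hi' | hi'
            · have := w i hi'; omega
            · simp at hi'; omega
          · exact (good_append2 w nd gp (by omega) (by omega) (by omega)).1
          · exact (good_append2 w nd gp (by omega) (by omega) (by omega)).2
          · rw [rsum_append2, vl]
            have hNv : (N:ℝ) = (Lucas (2*m+1) : ℝ) + (Lucas (2*m) : ℝ) + (k:ℝ) := by
              have h' : N = Lucas (2*m+1) + Lucas (2*m) + k := by omega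
              rw [h']; push_cast; ring
            rw [hNv, h1, h2]
            simp only [enrm, zp2, zm2, zp1, zm1]
            ring
    · rw [ELBL_succ_22,
        show (2*(((m+1):ℕ):ℤ)) = 2*(m:ℤ) + 2 from by push_cast; ring]
      intro N hN
      have hlen := hN
      simp only [List.length_append, List.length_map] at hlen
      rcases lt_or_ge N (ELBL m).2.2.length with hc1 | hc1
      · rw [getElem_3l _ _ _ _ (by simpa using hc1)]
        rw [List.getElem_map]
        obtain ⟨w, nd, gp, vl⟩ := hB N hc1
        refine ⟨?_, ?_, ?_, ?_⟩
        · intro i hi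
          rcases List.mem_append.1 hi with hi' | hi'
          · have := w i hi'; omega
          · simp at hi'; omega
        · exact (good_append1 w nd gp (by omega)).1
        · exact (good_append1 w nd gp (by omega)).2
        · rw [rsum_append1, vl]
          simp only [enrm, zp2, zm2, zp1, zm1]
          ring
      · rcases lt_or_ge (N - (ELBL m).2.2.length) (ELBL m).1.length with hc2 | hc2
        · rw [getElem_3m _ _ _ _ (by simpa using hc1) (by simpa using hc2)]
          simp only [List.length_map]
          rw [List.getElem_map]
          set k := N - (ELBL m).2.2.length with hk
          have hm1 : 1 ≤ m := by
            rcases Nat.eq_zero_or_pos m with rfl | h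
            · exfalso; rw [ELBL0] at hc2; simp at hc2
            · exact h
          obtain ⟨w, nd, gp, vl⟩ := hP k hc2
          refine ⟨?_, ?_, ?_, ?_⟩
          · intro i hi
            rcases List.mem_append.1 hi with hi' | hi'
            · have := w i hi'; omega
            · simp at hi'; omega
          · exact (good_append2 w nd gp (by omega) (by omega) (by omega)).1
          · exact (good_append2 w nd gp (by omega) (by omega) (by omega)).2
          · rw [rsum_append2, vl]
            have hNv : ((N:ℝ)+1) = (Lucas (2*m) : ℝ) + (k:ℝ) := by
              have h' : N + 1 = Lucas (2*m) + k := by omega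
              have h'' := congrArg (fun x : ℕ => (x:ℝ)) h'
              push_cast at h''; linarith
            rw [hNv, h1]
            simp only [enrm, zp2, zm2, zp1, zm1]
            ring
        · rw [getElem_3r _ _ _ _ (by simp only [List.length_map]; omega)]
          simp only [List.length_map]
          rw [List.getElem_map]
          set i := N - (ELBL m).2.2.length - (ELBL m).1.length with hidef
          have hilt : i < (ELBL m).2.2.length := by omega
          obtain ⟨w, nd, gp, vl⟩ := hB i hilt
          refine ⟨?_, ?_, ?_, ?_⟩
          · intro z hz
            rcases List.mem_append.1 hz with hz' | hz'
            · have := w z hz'; omega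
            · simp at hz'; omega
          · exact (good_append1 w nd gp (by omega)).1
          · exact (good_append1 w nd gp (by omega)).2
          · rw [rsum_append1, vl]
            have hNv : ((N:ℝ)+1) = (Lucas (2*m+1) : ℝ) + 1 + (i:ℝ) := by
              have h' : N + 1 = Lucas (2*m+1) + 1 + i := by omega
              have h'' := congrArg (fun x : ℕ => (x:ℝ)) h'
              push_cast at h''; linarith
            rw [hNv, h2]
            simp only [enrm, zp2, zm2, zp1, zm1]
            ring

def par (l : List ℤ) : ℕ := l.length % 2
def cpar (l : List ℤ) : ℕ := (l.length + 1) % 2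

lemma tauWord_append (u v : List ℕ) : tauWord (u ++ v) = tauWord u ++ tauWord v := by
  simp [tauWord]

lemma iter_append (m : ℕ) (u v : List ℕ) :
    tauWord^[m] (u ++ v) = tauWord^[m] u ++ tauWord^[m] v := by
  induction m generalizing u v with
  | zero => rfl
  | succ m ih => rw [Function.iterate_succ_apply, Function.iterate_succ_apply,
      Function.iterate_succ_apply, tauWord_append, ih]

lemma tw_succ (m a : ℕ) : tauWord^[m+1] [a] = tauWord^[m] (tau a) := by
  rw [Function.iterate_succ_apply]
  congr 1
  simp [tauWord]

lemma map_par_app2 (L : List (List ℤ)) (x y : ℤ) :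
    (L.map (· ++ [x, y])).map par = L.map par := by
  rw [List.map_map]; apply List.map_congr_left; intro l _; simp [par]
lemma map_cpar_app2 (L : List (List ℤ)) (x y : ℤ) :
    (L.map (· ++ [x, y])).map cpar = L.map cpar := by
  rw [List.map_map]; apply List.map_congr_left; intro l _; simp [cpar]; omega
lemma map_par_app1 (L : List (List ℤ)) (x : ℤ) :
    (L.map (· ++ [x])).map par = L.map cpar := by
  rw [List.map_map]; apply List.map_congr_left; intro l _; simp [par, cpar]
lemma map_cpar_app1 (L : List (List ℤ)) (x : ℤ) :
    (L.map (· ++ [x])).map cpar = L.map par := by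
  rw [List.map_map]; apply List.map_congr_left; intro l _; simp [par, cpar]; omega

/-- The eight correspondence claims between `τ^(k+1)` applied to each letter and the
parity words of the expansion lists. -/
lemma claims (k : ℕ) :
    (tauWord^[k+1] [1]).map lam = (ELBL k).2.1.map par ∧
    (tauWord^[k+1] [2]).map lam = (ELBL k).2.2.map par ++ (ELBL k).2.1.map par ∧
    (tauWord^[k+1] [3]).map lam = (ELBL (k+1)).2.2.map par ∧
    (tauWord^[k+1] [4]).map lam = (ELBL (k+1)).2.2.map cpar ++ (ELBL k).2.1.map par ∧
    (tauWord^[k+1] [5]).map lam = (ELBL k).2.1.map cpar ∧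
    (tauWord^[k+1] [6]).map lam = (ELBL k).2.2.map cpar ++ (ELBL k).2.1.map cpar ∧
    (tauWord^[k+1] [7]).map lam = (ELBL (k+1)).2.2.map cpar ∧
    (tauWord^[k+1] [8]).map lam = (ELBL (k+1)).2.2.map par ++ (ELBL k).2.1.map cpar := by
  induction k with
  | zero =>
    refine ⟨?_, ?_, ?_, ?_, ?_, ?_, ?_, ?_⟩ <;> rfl
  | succ k ih =>
    obtain ⟨c1, c2, c3, c4, c5, c6, c7, c8⟩ := ih
    have E21 := ELBL_succ_21 k
    have E22 := ELBL_succ_22 (k+1)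
    have E22' := ELBL_succ_22 k
    have E1 : (ELBL (k+1)).1 = (ELBL k).2.1 := ELBL_succ_1 k
    -- word expansions
    have w1 : tauWord^[k+2] [1] = tauWord^[k+1] [1] ++ tauWord^[k+1] [2] := by
      rw [tw_succ]; show tauWord^[k+1] ([1] ++ [2]) = _; rw [iter_append]
    have w2 : tauWord^[k+2] [2]
        = tauWord^[k+1] [3] ++ tauWord^[k+1] [1] ++ tauWord^[k+1] [2] := by
      rw [tw_succ]; show tauWord^[k+1] ([3] ++ ([1] ++ [2])) = _
      rw [iter_append, iter_append, List.append_assoc]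
    have w3 : tauWord^[k+2] [3] = tauWord^[k+1] [4] ++ tauWord^[k+1] [7] := by
      rw [tw_succ]; show tauWord^[k+1] ([4] ++ [7]) = _; rw [iter_append]
    have w4 : tauWord^[k+2] [4] = tauWord^[k+1] [8] ++ tauWord^[k+1] [3]
        ++ tauWord^[k+1] [1] ++ tauWord^[k+1] [2] := by
      rw [tw_succ]; show tauWord^[k+1] ([8] ++ ([3] ++ ([1] ++ [2]))) = _
      rw [iter_append, iter_append, iter_append, List.append_assoc, List.append_assoc]
    have w5 : tauWord^[k+2] [5] = tauWord^[k+1] [5] ++ tauWord^[k+1] [6] := by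
      rw [tw_succ]; show tauWord^[k+1] ([5] ++ [6]) = _; rw [iter_append]
    have w6 : tauWord^[k+2] [6]
        = tauWord^[k+1] [7] ++ tauWord^[k+1] [5] ++ tauWord^[k+1] [6] := by
      rw [tw_succ]; show tauWord^[k+1] ([7] ++ ([5] ++ [6])) = _
      rw [iter_append, iter_append, List.append_assoc]
    have w7 : tauWord^[k+2] [7] = tauWord^[k+1] [8] ++ tauWord^[k+1] [3] := by
      rw [tw_succ]; show tauWord^[k+1] ([8] ++ [3]) = _; rw [iter_append]
    have w8 : tauWord^[k+2] [8] = tauWord^[k+1] [4] ++ tauWord^[k+1] [7]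
        ++ tauWord^[k+1] [5] ++ tauWord^[k+1] [6] := by
      rw [tw_succ]; show tauWord^[k+1] ([4] ++ ([7] ++ ([5] ++ [6]))) = _
      rw [iter_append, iter_append, iter_append, List.append_assoc, List.append_assoc]
    refine ⟨?_, ?_, ?_, ?_, ?_, ?_, ?_, ?_⟩
    · rw [w1, List.map_append, c1, c2, E21]
      simp only [List.map_append, map_par_app2]
      try simp [List.append_assoc]
    · rw [w2, List.map_append, List.map_append, c3, c1, c2, E21]
      simp only [List.map_append, map_par_app2]
      try simp [List.append_assoc]
    · rw [w3, List.map_append, c4, c7, E22, E1]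
      simp only [List.map_append, map_par_app2, map_par_app1]
      try simp [List.append_assoc]
    · rw [w4, List.map_append, List.map_append, List.map_append, c8, c3, c1, c2, E22, E21, E1]
      simp only [List.map_append, map_par_app2, map_cpar_app2, map_par_app1, map_cpar_app1]
      try simp [List.append_assoc]
    · rw [w5, List.map_append, c5, c6, E21]
      simp only [List.map_append, map_cpar_app2]
      try simp [List.append_assoc]
    · rw [w6, List.map_append, List.map_append, c7, c5, c6, E21]
      simp only [List.map_append, map_cpar_app2]
      try simp [List.append_assoc]
    · rw [w7, List.map_append, c8, c3, E22, E1]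
      simp only [List.map_append, map_cpar_app2, map_cpar_app1]
      try simp [List.append_assoc]
    · rw [w8, List.map_append, List.map_append, List.map_append, c4, c7, c5, c6, E22, E21, E1]
      simp only [List.map_append, map_par_app2, map_cpar_app2, map_par_app1, map_cpar_app1]
      try simp [List.append_assoc]

lemma lucas_pos (n : ℕ) : 0 < Lucas n := by
  induction n using Nat.strong_induction_on with
  | _ n ih =>
    match n with
    | 0 => norm_num [Lucas]
    | 1 => norm_num [Lucas]
    | n+2 =>
      have h1 := ih (n+1) (by omega)
      have h2 := ih n (by omega)
      rw [show Lucas (n+2) = Lucas (n+1) + Lucas n from rfl]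
      omega

lemma le_lucas_odd (k : ℕ) : k ≤ Lucas (2*k+1) := by
  induction k with
  | zero => omega
  | succ k ih =>
    have h1 : Lucas (2*(k+1)+1) = Lucas (2*k+2) + Lucas (2*k+1) := by
      rw [show 2*(k+1)+1 = (2*k+1)+2 from by ring]; rfl
    have := lucas_pos (2*k+2)
    omega

def ind (l : List ℤ) : ℤ → ℕ := fun i => if i ∈ l then 1 else 0

lemma isBasePhi_of_good (N : ℕ) (l : List ℤ) (nd : l.Nodup) (gp : Gap l)
    (vl : rsum l = N) :
    IsBasePhi N (ind l) ∧ digitSum (ind l) = l.length := by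
  refine ⟨⟨?_, ?_, ?_, ?_⟩, ?_⟩
  · apply Set.Finite.subset l.toFinset.finite_toSet
    intro i hi
    simp only [Set.mem_setOf_eq] at hi
    by_contra hc
    simp only [Finset.coe_sort_coe, List.coe_toFinset, Set.mem_setOf_eq] at hc
    simp [ind, hc] at hi
  · intro i
    unfold ind
    split <;> omega
  · intro i
    by_cases h1 : i ∈ l
    · by_cases h2 : i + 1 ∈ l
      · have := gp i h1 (i+1) h2 (by omega); omega
      · simp [ind, h2]
    · simp [ind, h1]
  · have h0 : ∀ i ∉ l.toFinset, ((ind l i : ℕ) : ℝ) * phi ^ i = 0 := by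
      intro i hi
      simp only [List.mem_toFinset] at hi
      simp [ind, hi]
    rw [tsum_eq_sum h0, Finset.sum_congr rfl
      (fun i hi => by
        simp only [List.mem_toFinset] at hi
        simp [ind, hi] : ∀ i ∈ l.toFinset,
          ((ind l i : ℕ) : ℝ) * phi ^ i = phi ^ i),
      List.sum_toFinset _ nd]
    exact vl
  · have h0 : ∀ i ∉ l.toFinset, ind l i = 0 := by
      intro i hi
      simp only [List.mem_toFinset] at hi
      simp [ind, hi]
    rw [digitSum, tsum_eq_sum h0, Finset.sum_congr rfl
      (fun i hi => by
        simp only [List.mem_toFinset] at hi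
        simp [ind, hi] : ∀ i ∈ l.toFinset, ind l i = 1),
      Finset.sum_const, smul_eq_mul, mul_one]
    exact List.toFinset_card_of_nodup nd

lemma len_tw (m : ℕ) : m ≤ (tauWord^[m] [1]).length := by
  cases m with
  | zero => simp
  | succ k =>
    have c1 := (claims k).1
    have lE := (master k).2.1
    have hl := congrArg List.length c1
    simp only [List.length_map] at hl
    have hk := le_lucas_odd k
    omega

/-- Main Theorem: `T` is morphic. Each `τ^m(1)` is a prefix of `τ^{m+1}(1)`, the lengths of
the words `τ^m(1)` tend to infinity, and `T N = λ(a)` where `a` is the letter at position `N`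
of `τ^m(1)` whenever `N < |τ^m(1)|`; i.e. `T = λ(t)` for the fixed point `t` of `τ`
starting with 1. -/
theorem T_is_morphic (T : ℕ → ℕ)
    (hT : ∀ (N : ℕ) (d : ℤ → ℕ), IsBasePhi N d → T N = digitSum d % 2) :
    (∀ m : ℕ, tauWord^[m] [1] <+: tauWord^[m + 1] [1]) ∧
    Filter.Tendsto (fun m : ℕ => (tauWord^[m] [1]).length) Filter.atTop Filter.atTop ∧
    (∀ (N m : ℕ) (h : N < (tauWord^[m] [1]).length),
      T N = lam ((tauWord^[m] [1]).get ⟨N, h⟩)) := by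
  refine ⟨?_, ?_, ?_⟩
  · intro m
    have hw : tauWord^[m+1] [1] = tauWord^[m] [1] ++ tauWord^[m] [2] := by
      rw [tw_succ]; show tauWord^[m] ([1] ++ [2]) = _; rw [iter_append]
    rw [hw]
    exact List.prefix_append _ _
  · exact Filter.tendsto_atTop_mono len_tw Filter.tendsto_id
  · intro N m h
    match m with
    | 0 =>
      have hN : N = 0 := by simpa using h
      subst hN
      have h0 : IsBasePhi 0 (fun _ => 0) := by
        refine ⟨by simp, by simp, by simp, by simp⟩
      rw [hT 0 _ h0]
      have hd : digitSum (fun _ => 0) = 0 := by simp [digitSum]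
      rw [hd]
      rfl
    | (k+1) =>
      have c1 := (claims k).1
      obtain ⟨lP, lE, lB, hPi, hEi, hBi⟩ := master k
      have hlen : (tauWord^[k+1] [1]).length = (ELBL k).2.1.length := by
        have := congrArg List.length c1
        simpa using this
      have hN : N < (ELBL k).2.1.length := by rw [← hlen]; exact h
      obtain ⟨w, nd, gp, vl⟩ := hEi N hN
      obtain ⟨hbp, hds⟩ := isBasePhi_of_good N _ nd gp vl
      rw [hT N _ hbp, hds]
      have hg := List.getElem_of_eq c1 (i := N)
        (by rw [List.length_map]; exact h)
      rw [List.getElem_map, List.getElem_map] at hg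
      rw [List.get_eq_getElem]
      rw [hg]
      rfl
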